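/- arXiv:0804.2641 — 3 statements merged into one kernel-verified Lean document; each statement's English description precedes it below -/
import Mathlib

section
/- Let W be a stored-energy density satisfying the standard assumptions (see context) and Q3(F) = D²W(Id)(F,F). Then Q3 is positive definite on symmetric matrices in the quantitative sense: there exists a constant c > 0 such that Q3(F) ≥ c |sym F|² for every F ∈ ℝ^{3×3}, where |·| denotes the Frobenius norm. -/
/- Frobenius norm instances on matrices -/
attribute [local instance] Matrix.frobeniusNormedAddCommGroup Matrix.frobeniusNormedSpace

open Matrix

/-- The rotation group SO(3). -/
def SO3 : Set (Matrix (Fin 3) (Fin 3) ℝ) :=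
  {R | Rᵀ * R = 1 ∧ R.det = 1}

/-- The symmetric part of a matrix. -/
noncomputable def symPart (F : Matrix (Fin 3) (Fin 3) ℝ) : Matrix (Fin 3) (Fin 3) ℝ :=
  (1 / 2 : ℝ) • (F + Fᵀ)

/-!
Along the ray `t ↦ 1 + t • G`, second-order Taylor expansion at the minimum `Id` gives
`W (1 + t • G) / t² → Q3 G / 2`. For the lower bound, `FᵀF - RᵀR = Fᵀ(F - R) + (F - R)ᵀR` yields
`dist (F, SO(3)) ≥ ‖FᵀF - 1‖ / (‖F‖ + ‖1‖)`, and `(1 + tG)ᵀ(1 + tG) - 1 = t (G + Gᵀ + t GᵀG)`;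
with coercivity, `W (1 + t • G) / t²` is bounded below by a continuous function of `t` whose
value at `0` is `C ‖sym G‖² / ‖1‖²`.
-/

open Filter Topology

theorem tendsto_taylor_two_div_sq {g g' : ℝ → ℝ} {a : ℝ}
    (hg : ∀ᶠ t in 𝓝 0, HasDerivAt g (g' t) t) (hg' : HasDerivAt g' a 0) :
    Tendsto (fun t => (g t - g 0 - t * g' 0) / t ^ 2) (𝓝[≠] 0) (𝓝 (a / 2)) := by
  refine HasDerivAt.lhopital_zero_nhdsNE (f' := fun t => g' t - g' 0) (g' := fun t => 2 * t)
    ?_ ?_ ?_ ?_ ?_ ?_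
  · refine (hg.filter_mono nhdsWithin_le_nhds).mono fun t ht => ?_
    simpa using ((ht.sub_const (g 0)).fun_sub ((hasDerivAt_id t).mul_const (g' 0)))
  · exact .of_forall fun t => by simpa using hasDerivAt_pow 2 t
  · filter_upwards [self_mem_nhdsWithin] with t ht
    exact mul_ne_zero two_ne_zero ht
  · have hcont : ContinuousAt (fun t => g t - g 0 - t * g' 0) 0 :=
      (hg.self_of_nhds.continuousAt.sub continuousAt_const).sub
        (continuousAt_id.mul continuousAt_const)
    simpa using hcont.tendsto.mono_left nhdsWithin_le_nhds
  · simpa using ((continuous_pow 2).tendsto (0 : ℝ)).mono_left nhdsWithin_le_nhds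
  · have hslope := (hasDerivAt_iff_tendsto_slope_zero.mp hg').div_const 2
    refine hslope.congr fun t => ?_
    simp only [zero_add, smul_eq_mul]
    field_simp

theorem tendsto_taylor_two_div_sq_of_contDiffAt {E : Type*} [NormedAddCommGroup E]
    [NormedSpace ℝ E] {f : E → ℝ} {x : E} (hf : ContDiffAt ℝ 2 f x) (v : E) :
    Tendsto (fun t : ℝ => (f (x + t • v) - f x - t * fderiv ℝ f x v) / t ^ 2) (𝓝[≠] 0)
      (𝓝 (iteratedFDeriv ℝ 2 f x ![v, v] / 2)) := by
  have hline : ∀ t : ℝ, HasDerivAt (fun s : ℝ => x + s • v) v t := fun t => by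
    simpa using ((hasDerivAt_id t).smul_const v).const_add x
  have hline0 : Tendsto (fun s : ℝ => x + s • v) (𝓝 0) (𝓝 x) := by
    simpa using ((hline 0).continuousAt.tendsto)
  have hdf : ∀ᶠ t in 𝓝 (0 : ℝ),
      HasDerivAt (fun s => f (x + s • v)) (fderiv ℝ f (x + t • v) v) t := by
    filter_upwards [hline0.eventually (hf.eventually (by simp))] with t ht
    exact (ht.differentiableAt (by simp)).hasFDerivAt.comp_hasDerivAt t (hline t)
  have hd2f : HasDerivAt (fun s : ℝ => fderiv ℝ f (x + s • v) v)
      (fderiv ℝ (fderiv ℝ f) x v v) 0 := by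
    have h : HasFDerivAt (fderiv ℝ f) (fderiv ℝ (fderiv ℝ f) x) (x + (0 : ℝ) • v) := by
      rw [zero_smul, add_zero]
      exact ((hf.fderiv_right (m := 1) le_rfl).differentiableAt one_ne_zero).hasFDerivAt
    exact (ContinuousLinearMap.apply ℝ ℝ v).hasFDerivAt.comp_hasDerivAt 0
      (h.comp_hasDerivAt 0 (hline 0))
  simpa [iteratedFDeriv_two_apply] using tendsto_taylor_two_div_sq hdf hd2f

theorem IsLocalMin.tendsto_sub_div_sq {E : Type*} [NormedAddCommGroup E] [NormedSpace ℝ E]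
    {f : E → ℝ} {x : E} (hmin : IsLocalMin f x) (hf : ContDiffAt ℝ 2 f x) (v : E) :
    Tendsto (fun t : ℝ => (f (x + t • v) - f x) / t ^ 2) (𝓝[≠] 0)
      (𝓝 (iteratedFDeriv ℝ 2 f x ![v, v] / 2)) := by
  simpa [hmin.fderiv_eq_zero] using tendsto_taylor_two_div_sq_of_contDiffAt hf v

namespace Matrix

variable {m n : Type*} [Fintype m] [Fintype n]

theorem frobenius_norm_sq_eq_trace (A : Matrix m n ℝ) : ‖A‖ ^ 2 = (Aᵀ * A).trace := by
  rw [frobenius_norm_def, ← Real.rpow_natCast, ← Real.rpow_mul (by positivity)]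
  simp [trace, mul_apply, Finset.sum_comm (γ := m), sq]

theorem frobenius_norm_eq_norm_one_of_transpose_mul_self [DecidableEq n] {R : Matrix n n ℝ}
    (hR : Rᵀ * R = 1) : ‖R‖ = ‖(1 : Matrix n n ℝ)‖ := by
  rw [← sq_eq_sq₀ (norm_nonneg _) (norm_nonneg _), frobenius_norm_sq_eq_trace,
    frobenius_norm_sq_eq_trace, hR, transpose_one, one_mul]

theorem frobenius_norm_transpose_mul_self_sub_le (F R : Matrix m n ℝ) :
    ‖Fᵀ * F - Rᵀ * R‖ ≤ ‖F - R‖ * (‖F‖ + ‖R‖) :=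
  calc ‖Fᵀ * F - Rᵀ * R‖ = ‖Fᵀ * (F - R) + (F - R)ᵀ * R‖ := by
        rw [transpose_sub, Matrix.mul_sub, Matrix.sub_mul]; abel_nf
    _ ≤ ‖Fᵀ‖ * ‖F - R‖ + ‖(F - R)ᵀ‖ * ‖R‖ :=
        (norm_add_le _ _).trans (add_le_add (frobenius_norm_mul _ _) (frobenius_norm_mul _ _))
    _ = ‖F - R‖ * (‖F‖ + ‖R‖) := by simp only [frobenius_norm_transpose]; ring

theorem frobenius_norm_transpose_mul_self_sub_one_div_le_infDist [DecidableEq n]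
    {S : Set (Matrix n n ℝ)} (hS : S.Nonempty) (hS_orth : ∀ R ∈ S, Rᵀ * R = 1)
    (F : Matrix n n ℝ) :
    ‖Fᵀ * F - 1‖ / (‖F‖ + ‖(1 : Matrix n n ℝ)‖) ≤ Metric.infDist F S := by
  refine (Metric.le_infDist hS).2 fun R hR => div_le_of_le_mul₀ (by positivity) dist_nonneg ?_
  have h := frobenius_norm_transpose_mul_self_sub_le F R
  rwa [hS_orth R hR, frobenius_norm_eq_norm_one_of_transpose_mul_self (hS_orth R hR),
    ← dist_eq_norm] at h

theorem transpose_mul_self_one_add_smul_sub_one [DecidableEq n] (t : ℝ) (G : Matrix n n ℝ) :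
    (1 + t • G)ᵀ * (1 + t • G) - 1 = t • (G + Gᵀ + t • (Gᵀ * G)) := by
  simp only [transpose_add, transpose_one, transpose_smul, add_mul, mul_add, one_mul, mul_one,
    Matrix.smul_mul, Matrix.mul_smul, smul_add, smul_smul]
  abel

theorem le_infDist_one_add_smul [DecidableEq n] {S : Set (Matrix n n ℝ)} (hS : S.Nonempty)
    (hS_orth : ∀ R ∈ S, Rᵀ * R = 1) (G : Matrix n n ℝ) {t : ℝ} (ht : 0 ≤ t) :
    t * (‖G + Gᵀ + t • (Gᵀ * G)‖ / (‖1 + t • G‖ + ‖(1 : Matrix n n ℝ)‖)) ≤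
      Metric.infDist (1 + t • G) S := by
  have h := frobenius_norm_transpose_mul_self_sub_one_div_le_infDist hS hS_orth (1 + t • G)
  rwa [transpose_mul_self_one_add_smul_sub_one, norm_smul, Real.norm_of_nonneg ht,
    mul_div_assoc] at h

end Matrix

theorem one_mem_SO3 : (1 : Matrix (Fin 3) (Fin 3) ℝ) ∈ SO3 := ⟨by simp, by simp⟩

theorem norm_add_transpose_eq_two_mul_norm_symPart (F : Matrix (Fin 3) (Fin 3) ℝ) :
    ‖F + Fᵀ‖ = 2 * ‖symPart F‖ := by
  rw [symPart, norm_smul]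
  norm_num
  ring

theorem Q3_positive_definite_on_symmetric_general
    (W : Matrix (Fin 3) (Fin 3) ℝ → ℝ)
    (hWpos : ∀ F, 0 ≤ W F)
    (hW_C2 : ∃ U : Set (Matrix (Fin 3) (Fin 3) ℝ), IsOpen U ∧ SO3 ⊆ U ∧ ContDiffOn ℝ 2 W U)
    (hW0 : ∀ R ∈ SO3, W R = 0)
    (hWcoerc : ∃ C > 0, ∀ F, C * (Metric.infDist F SO3) ^ 2 ≤ W F)
    (Q3 : Matrix (Fin 3) (Fin 3) ℝ → ℝ)
    (hQ3 : ∀ G, Q3 G = (iteratedFDeriv ℝ 2 W 1) ![G, G]) :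
    ∃ c > 0, ∀ F : Matrix (Fin 3) (Fin 3) ℝ, c * ‖symPart F‖ ^ 2 ≤ Q3 F := by
  obtain ⟨U, hU, hSO3U, hWU⟩ := hW_C2
  obtain ⟨C, hC, hWC⟩ := hWcoerc
  set e := ‖(1 : Matrix (Fin 3) (Fin 3) ℝ)‖
  have he : 0 < e := norm_pos_iff.2 one_ne_zero
  refine ⟨2 * C / e ^ 2, by positivity, fun G => ?_⟩
  set h : ℝ → ℝ := fun t => ‖G + Gᵀ + t • (Gᵀ * G)‖ / (‖1 + t • G‖ + e)
  have hW_div : Tendsto (fun t : ℝ => W (1 + t • G) / t ^ 2) (𝓝[>] 0) (𝓝 (Q3 G / 2)) := by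
    have hW1 : W 1 = 0 := hW0 1 one_mem_SO3
    have hmin : IsLocalMin W 1 := .of_forall fun F => hW1 ▸ hWpos F
    have h := hmin.tendsto_sub_div_sq (hWU.contDiffAt (hU.mem_nhds (hSO3U one_mem_SO3))) G
    simpa [hW1, hQ3] using h.mono_left (nhdsGT_le_nhdsNE 0)
  have h_cont : Tendsto (fun t => C * h t ^ 2) (𝓝[>] 0) (𝓝 (C * h 0 ^ 2)) := by
    have : ContinuousAt h 0 := ContinuousAt.div (by fun_prop) (by fun_prop) (by simp [e])
    exact ((this.pow 2).const_mul C).tendsto.mono_left nhdsWithin_le_nhds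
  have h_le : ∀ t > 0, C * h t ^ 2 ≤ W (1 + t • G) / t ^ 2 := fun t ht => by
    have h_dist := le_infDist_one_add_smul ⟨1, one_mem_SO3⟩ (fun R hR => hR.1) G ht.le
    rw [le_div_iff₀ (by positivity)]
    calc C * h t ^ 2 * t ^ 2 = C * (t * h t) ^ 2 := by ring
      _ ≤ C * Metric.infDist (1 + t • G) SO3 ^ 2 := by gcongr
      _ ≤ W (1 + t • G) := hWC _
  have key := le_of_tendsto_of_tendsto h_cont hW_div (eventually_mem_nhdsWithin.mono h_le)
  have h0 : h 0 = ‖symPart G‖ / e := by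
    simp only [h, zero_smul, add_zero, norm_add_transpose_eq_two_mul_norm_symPart]
    field_simp
    ring
  rw [h0] at key
  calc _ = 2 * (C * (‖symPart G‖ / e) ^ 2) := by ring
    _ ≤ Q3 G := by linarith

/-- the quadratic form `Q3(F) = D²W(Id)(F,F)` is positive definite on symmetric
matrices, quantitatively: `Q3(F) ≥ c |sym F|²` for some `c > 0`, with `|·|` the Frobenius norm. -/
theorem Q3_positive_definite_on_symmetric
    (W : Matrix (Fin 3) (Fin 3) ℝ → ℝ)
    (hWpos : ∀ F, 0 ≤ W F)
    (hW_C2 : ∃ U : Set (Matrix (Fin 3) (Fin 3) ℝ), IsOpen U ∧ SO3 ⊆ U ∧ ContDiffOn ℝ 2 W U)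
    (hW0 : ∀ R ∈ SO3, W R = 0)
    (hWframe : ∀ R ∈ SO3, ∀ F, W (R * F) = W F)
    (hWcoerc : ∃ C > 0, ∀ F, C * (Metric.infDist F SO3) ^ 2 ≤ W F)
    (Q3 : Matrix (Fin 3) (Fin 3) ℝ → ℝ)
    (hQ3 : ∀ G, Q3 G = (iteratedFDeriv ℝ 2 W 1) ![G, G]) :
    ∃ c > 0, ∀ F : Matrix (Fin 3) (Fin 3) ℝ, c * ‖symPart F‖ ^ 2 ≤ Q3 F :=
  Q3_positive_definite_on_symmetric_general W hWpos hW_C2 hW0 hWcoerc Q3 hQ3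
end

section
/- Let Q be a quadratic form on 3×3 matrices which depends only on the symmetric part of its argument and is coercive on symmetric matrices (see context), and let n ∈ ℝ³ be a unit vector. Then for every tangential matrix F (i.e., Fn = 0 and Fᵀn = 0) the function ℝ³ ∋ c ↦ Q(F + c⊗n + n⊗c) attains its minimum at a unique point c(F) ∈ ℝ³, and the resulting map F ↦ c(F) is linear on the space of tangential matrices. -/
/-!
With `L c = c ⊗ n + n ⊗ c`, the matrices `L c` are symmetric and `L` is injective, so coercivity
makes `B (L ·) (L ·)` positive definite on `ℝ³`. Its Riesz isomorphism solves the normal equations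
`B (F + L m, L d) = 0 (∀ d)` by a point `m = m(F)` depending linearly on `F`, and completing the
square gives `Q (F + L c) = Q (F + L m) + Q (L (c - m))`, whence `m` is the unique minimizer.
-/

attribute [local instance] Matrix.frobeniusNormedAddCommGroup Matrix.frobeniusNormedSpace

open Matrix

def IsTangential (n : Fin 3 → ℝ) (F : Matrix (Fin 3) (Fin 3) ℝ) : Prop :=
  F.mulVec n = 0 ∧ Fᵀ.mulVec n = 0

namespace LinearMap

variable {K V W : Type*} [Field K] [AddCommGroup V] [Module K V] [AddCommGroup W] [Module K W]

theorem nondegenerate_compl₁₂_of_pos [Preorder K] {B : W →ₗ[K] W →ₗ[K] K} {L : V →ₗ[K] W}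
    (hpos : ∀ v ≠ 0, 0 < B (L v) (L v)) : (B.compl₁₂ L L).Nondegenerate := by
  have hsep : ∀ v, B (L v) (L v) = 0 → v = 0 := fun v hv ↦ by
    by_contra hne
    exact (hpos v hne).ne' hv
  exact ⟨fun v hv ↦ hsep v (hv v), fun w hw ↦ hsep w (hw w)⟩

variable [FiniteDimensional K V] (B : W →ₗ[K] W →ₗ[K] K) (L : V →ₗ[K] W)

noncomputable def orthCorrection (hB : (B.compl₁₂ L L).Nondegenerate) : W →ₗ[K] V :=
  -((BilinForm.toDual (B.compl₁₂ L L) hB).symm.toLinearMap ∘ₗ B.compl₂ L)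

variable {B L}

theorem apply_add_orthCorrection_eq_zero (hB : (B.compl₁₂ L L).Nondegenerate) (F : W) (d : V) :
    B (F + L (orthCorrection B L hB F)) (L d) = 0 := by
  have key := BilinForm.apply_toDual_symm_apply (hB := hB) (B.compl₂ L F) d
  simp only [compl₁₂_apply, compl₂_apply] at key
  simp [orthCorrection, key]

theorem apply_add_self_eq_add_orthCorrection (hsymm : ∀ x y, B x y = B y x)
    (hB : (B.compl₁₂ L L).Nondegenerate) (F : W) (c : V) :
    B (F + L c) (F + L c) =
      B (F + L (orthCorrection B L hB F)) (F + L (orthCorrection B L hB F)) +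
        B (L (c - orthCorrection B L hB F)) (L (c - orthCorrection B L hB F)) := by
  set m := orthCorrection B L hB F
  have hortho := apply_add_orthCorrection_eq_zero hB F (c - m)
  have hsplit : F + L c = (F + L m) + L (c - m) := by rw [map_sub]; abel
  have hortho' : B (L (c - m)) (F + L m) = 0 := by rw [hsymm, hortho]
  simp only [hsplit, map_add, add_apply] at hortho hortho' ⊢
  linear_combination hortho + hortho'

variable [LinearOrder K] [IsStrictOrderedRing K]

theorem apply_add_orthCorrection_le (hsymm : ∀ x y, B x y = B y x)
    (hpos : ∀ v ≠ 0, 0 < B (L v) (L v)) (hB : (B.compl₁₂ L L).Nondegenerate) (F : W) (c : V) :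
    B (F + L (orthCorrection B L hB F)) (F + L (orthCorrection B L hB F)) ≤
      B (F + L c) (F + L c) := by
  rw [apply_add_self_eq_add_orthCorrection hsymm hB F c, le_add_iff_nonneg_right]
  by_cases h : c - orthCorrection B L hB F = 0
  · simp [h]
  · exact (hpos _ h).le

theorem eq_orthCorrection_of_le (hsymm : ∀ x y, B x y = B y x)
    (hpos : ∀ v ≠ 0, 0 < B (L v) (L v)) (hB : (B.compl₁₂ L L).Nondegenerate) {F : W} {c : V}
    (hc : B (F + L c) (F + L c) ≤
      B (F + L (orthCorrection B L hB F)) (F + L (orthCorrection B L hB F))) :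
    c = orthCorrection B L hB F := by
  rw [apply_add_self_eq_add_orthCorrection hsymm hB F c, add_le_iff_nonpos_right] at hc
  by_contra h
  exact (hpos _ (sub_ne_zero.mpr h)).not_ge hc

end LinearMap

namespace Matrix

variable {R ι : Type*} [CommRing R]

def symTensor (n : ι → R) : (ι → R) →ₗ[R] Matrix ι ι R where
  toFun c := vecMulVec c n + vecMulVec n c
  map_add' c d := by simp only [add_vecMulVec, vecMulVec_add]; abel
  map_smul' a c := by simp [smul_add]

theorem symTensor_apply (n c : ι → R) : symTensor n c = vecMulVec c n + vecMulVec n c := rfl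

@[simp]
theorem transpose_symTensor (n c : ι → R) : (symTensor n c)ᵀ = symTensor n c := by
  simp [symTensor_apply, add_comm]

variable [Fintype ι]

theorem symTensor_mulVec (n c : ι → R) :
    symTensor n c *ᵥ n = (n ⬝ᵥ n) • c + (c ⬝ᵥ n) • n := by
  simp [symTensor_apply, add_mulVec, vecMulVec_mulVec]

theorem symTensor_injective {K : Type*} [Field K] [LinearOrder K] [IsStrictOrderedRing K]
    {n : ι → K} (hn : n ≠ 0) : Function.Injective (symTensor n) := by
  rw [← LinearMap.ker_eq_bot, LinearMap.ker_eq_bot']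
  intro c hc
  have hnn : n ⬝ᵥ n ≠ 0 := by simpa [dotProduct_self_eq_zero] using hn
  have hmul := symTensor_mulVec n c
  rw [hc, zero_mulVec] at hmul
  have hcn : c ⬝ᵥ n = 0 := by
    have := congrArg (· ⬝ᵥ n) hmul
    simp only [zero_dotProduct, add_dotProduct, smul_dotProduct, smul_eq_mul] at this
    have : (2 * (n ⬝ᵥ n)) * (c ⬝ᵥ n) = 0 := by linarith
    simpa [hnn] using this
  simpa [hcn, hnn] using hmul.symm

end Matrix

theorem symPart_symTensor (n c : Fin 3 → ℝ) : symPart (symTensor n c) = symTensor n c := by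
  rw [symPart, transpose_symTensor, ← two_smul ℝ, smul_smul]
  norm_num

theorem unique_linear_minimizer_of_reduced_quadratic_form_general
    (Q : Matrix (Fin 3) (Fin 3) ℝ → ℝ)
    (B : Matrix (Fin 3) (Fin 3) ℝ →ₗ[ℝ] Matrix (Fin 3) (Fin 3) ℝ →ₗ[ℝ] ℝ)
    (hB_symm : ∀ F G, B F G = B G F)
    (hQ : ∀ F, Q F = B F F)
    (c₀ : ℝ) (hc₀ : 0 < c₀)
    (hQ_coerc : ∀ F, c₀ * ‖symPart F‖ ^ 2 ≤ Q F)
    (n : Fin 3 → ℝ) (hn : ∑ i, n i ^ 2 = 1) :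
    ∃ cmap : Matrix (Fin 3) (Fin 3) ℝ → (Fin 3 → ℝ),
      (∀ F, IsTangential n F →
        (∀ c : Fin 3 → ℝ,
          Q (F + vecMulVec (cmap F) n + vecMulVec n (cmap F))
            ≤ Q (F + vecMulVec c n + vecMulVec n c)) ∧
        (∀ c : Fin 3 → ℝ,
          (∀ c' : Fin 3 → ℝ,
            Q (F + vecMulVec c n + vecMulVec n c) ≤ Q (F + vecMulVec c' n + vecMulVec n c'))
          → c = cmap F)) ∧
      (∀ F G, IsTangential n F → IsTangential n G → cmap (F + G) = cmap F + cmap G) ∧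
      (∀ (a : ℝ) F, IsTangential n F → cmap (a • F) = a • cmap F) := by
  have hn0 : n ≠ 0 := by
    rintro rfl
    simp at hn
  have hpos : ∀ c ≠ 0, 0 < B (symTensor n c) (symTensor n c) := fun c hc ↦ by
    have hne : symTensor n c ≠ 0 := (map_ne_zero_iff _ (symTensor_injective hn0)).mpr hc
    calc 0 < c₀ * ‖symTensor n c‖ ^ 2 := by positivity
      _ ≤ _ := by simpa [symPart_symTensor, hQ] using hQ_coerc (symTensor n c)
  have hB := LinearMap.nondegenerate_compl₁₂_of_pos hpos
  have hrw : ∀ F c, F + vecMulVec c n + vecMulVec n c = F + symTensor n c := fun F c ↦ by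
    rw [symTensor_apply, add_assoc]
  refine ⟨LinearMap.orthCorrection B (symTensor n) hB, fun F _ ↦ ⟨fun c ↦ ?_, fun c hc ↦ ?_⟩,
    fun F G _ _ ↦ map_add _ F G, fun a F _ ↦ map_smul _ a F⟩
  · simpa only [hrw, hQ] using LinearMap.apply_add_orthCorrection_le hB_symm hpos hB F c
  · refine LinearMap.eq_orthCorrection_of_le hB_symm hpos hB ?_
    simpa only [hrw, hQ] using hc (LinearMap.orthCorrection B (symTensor n) hB F)

/-- for a coercive quadratic form `Q` depending only on the symmetric part, and a
unit vector `n`, the function `c ↦ Q(F + c⊗n + n⊗c)` has a unique minimizer `c(F)` for each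
tangential matrix `F`, and `F ↦ c(F)` is linear on tangential matrices. -/
theorem unique_linear_minimizer_of_reduced_quadratic_form
    (Q : Matrix (Fin 3) (Fin 3) ℝ → ℝ)
    (B : Matrix (Fin 3) (Fin 3) ℝ →ₗ[ℝ] Matrix (Fin 3) (Fin 3) ℝ →ₗ[ℝ] ℝ)
    (hB_symm : ∀ F G, B F G = B G F)
    (hQ : ∀ F, Q F = B F F)
    (hQ_sym : ∀ F, Q F = Q (symPart F))
    (c₀ : ℝ) (hc₀ : 0 < c₀)
    (hQ_coerc : ∀ F, c₀ * ‖symPart F‖ ^ 2 ≤ Q F)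
    (n : Fin 3 → ℝ) (hn : ∑ i, n i ^ 2 = 1) :
    ∃ cmap : Matrix (Fin 3) (Fin 3) ℝ → (Fin 3 → ℝ),
      (∀ F, IsTangential n F →
        (∀ c : Fin 3 → ℝ,
          Q (F + vecMulVec (cmap F) n + vecMulVec n (cmap F))
            ≤ Q (F + vecMulVec c n + vecMulVec n c)) ∧
        (∀ c : Fin 3 → ℝ,
          (∀ c' : Fin 3 → ℝ,
            Q (F + vecMulVec c n + vecMulVec n c) ≤ Q (F + vecMulVec c' n + vecMulVec n c'))
          → c = cmap F)) ∧
      (∀ F G, IsTangential n F → IsTangential n G → cmap (F + G) = cmap F + cmap G) ∧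
      (∀ (a : ℝ) F, IsTangential n F → cmap (a • F) = a • cmap F) :=
  unique_linear_minimizer_of_reduced_quadratic_form_general Q B hB_symm hQ c₀ hc₀ hQ_coerc n hn
end

section
/- Let Q be a quadratic form on 3×3 matrices which depends only on the symmetric part of its argument and is coercive on symmetric matrices (see context), let n ∈ ℝ³ be a unit vector, and define Q2(F) = min_{c ∈ ℝ³} Q(F + c⊗n + n⊗c) for tangential matrices F. Then: (i) Q2 is itself a quadratic form on the space of tangential matrices, i.e., there exists a symmetric bilinear form B2 on tangential matrices with Q2(F) = B2(F,F); (ii) Q2 depends only on the symmetric part of its argument, Q2(F) = Q2(sym F); and (iii) Q2 is positive definite on symmetric tangential matrices: there exists c' > 0 with Q2(F) ≥ c'|sym F|² for every tangential F. -/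
/- Frobenius norm instances on matrices -/
attribute [local instance] Matrix.frobeniusNormedAddCommGroup Matrix.frobeniusNormedSpace

open Matrix

/-- The reduced quadratic form `Q2(F) = min_{c ∈ ℝ³} Q(F + c⊗n + n⊗c)` (the minimum is
attained under the coercivity assumptions, so it coincides with the infimum used here). -/
noncomputable def Q2 (Q : Matrix (Fin 3) (Fin 3) ℝ → ℝ) (n : Fin 3 → ℝ)
    (F : Matrix (Fin 3) (Fin 3) ℝ) : ℝ :=
  sInf (Set.range fun c : Fin 3 → ℝ => Q (F + vecMulVec c n + vecMulVec n c))

/-! The competitors `F + c⊗n + n⊗c` form the affine space `F + W`, where `W` is the range of the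
linear map `c ↦ c⊗n + n⊗c`. Matrices in `W` are symmetric, so coercivity makes `B` positive
definite on `W`; hence `W` has a `B`-orthogonal complement, and the projection `P` onto it along `W`
is a linear minimizer, giving `Q2 F = B (P F) (P F)`. Since `W` consists of symmetric matrices,
`sym (F + w) = sym F + w`, which gives (ii). For tangential `F`, `sym F` is Frobenius-orthogonal to
`W`, so `‖sym (F + w)‖ ≥ ‖sym F‖` and the coercivity constant of `Q` passes to `Q2`. -/

namespace LinearMap.BilinForm

lemma apply_add_add_of_mem_orthogonal {R M : Type*} [CommRing R] [AddCommGroup M] [Module R M]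
    {B : LinearMap.BilinForm R M} (hB : B.IsSymm) {W : Submodule R M}
    {x w : M} (hx : x ∈ B.orthogonal W) (hw : w ∈ W) :
    B (x + w) (x + w) = B x x + B w w := by
  have hwx : B w x = 0 := hx w hw
  simp only [map_add, LinearMap.add_apply, hB.eq x w, hwx]
  ring

theorem exists_linearMap_le_apply_add {𝕜 V : Type*} [Field 𝕜] [LinearOrder 𝕜]
    [IsStrictOrderedRing 𝕜] [AddCommGroup V] [Module 𝕜 V] [FiniteDimensional 𝕜 V]
    {B : LinearMap.BilinForm 𝕜 V} (hB : B.IsSymm) {W : Submodule 𝕜 V}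
    (hW : ∀ w ∈ W, w ≠ 0 → 0 < B w w) :
    ∃ P : V →ₗ[𝕜] V, ∀ x, P x - x ∈ W ∧ ∀ w ∈ W, B (P x) (P x) ≤ B (x + w) (x + w) := by
  have hcompl : IsCompl (B.orthogonal W) W := by
    refine ((isCompl_orthogonal_iff_disjoint hB.isRefl).2 ?_).symm
    refine Submodule.disjoint_def.2 fun x hxW hx => ?_
    by_contra hx0
    exact (hW x hxW hx0).ne' (hx x hxW)
  refine ⟨(B.orthogonal W).projection W hcompl, fun x => ⟨?_, fun w hw => ?_⟩⟩
  · rw [← neg_mem_iff, neg_sub]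
    exact Submodule.sub_projection_mem hcompl x
  · set P := (B.orthogonal W).projection W hcompl
    have hPx : P x ∈ B.orthogonal W := Submodule.projection_apply_mem hcompl x
    have hw' : x - P x + w ∈ W := W.add_mem (Submodule.sub_projection_mem hcompl x) hw
    have hw'_nonneg : 0 ≤ B (x - P x + w) (x - P x + w) := by
      by_cases h0 : x - P x + w = 0
      · simp [h0]
      · exact (hW _ hw' h0).le
    calc B (P x) (P x) ≤ B (P x) (P x) + B (x - P x + w) (x - P x + w) := by linarith
      _ = B (x + w) (x + w) := by
        rw [← apply_add_add_of_mem_orthogonal hB hPx hw', ← add_assoc,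
          add_sub_cancel]

end LinearMap.BilinForm

section SymVecMulVec

variable {ι R : Type*} [CommRing R]

def symVecMulVec (n : ι → R) : (ι → R) →ₗ[R] Matrix ι ι R where
  toFun c := vecMulVec c n + vecMulVec n c
  map_add' a b := by simp only [add_vecMulVec, vecMulVec_add]; abel
  map_smul' r a := by simp only [smul_vecMulVec, vecMulVec_smul, smul_add, RingHom.id_apply]

lemma symVecMulVec_apply (n c : ι → R) : symVecMulVec n c = vecMulVec c n + vecMulVec n c := rfl

lemma isSymm_symVecMulVec (n c : ι → R) : (symVecMulVec n c).IsSymm := by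
  simp only [IsSymm, symVecMulVec_apply, transpose_add, transpose_vecMulVec, add_comm]

lemma sum_mul_symVecMulVec [Fintype ι] (A : Matrix ι ι R) (n c : ι → R) :
    ∑ i, ∑ j, A i j * symVecMulVec n c i j = c ⬝ᵥ (A *ᵥ n) + c ⬝ᵥ (Aᵀ *ᵥ n) := by
  simp only [symVecMulVec_apply, Matrix.add_apply, vecMulVec_apply, mul_add,
    Finset.sum_add_distrib, dotProduct, mulVec, transpose_apply, Finset.mul_sum]
  congr 1
  · exact Finset.sum_congr rfl fun i _ => Finset.sum_congr rfl fun j _ => by ring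
  · rw [Finset.sum_comm]
    exact Finset.sum_congr rfl fun i _ => Finset.sum_congr rfl fun j _ => by ring

end SymVecMulVec

lemma frobenius_norm_sq_eq_sum {m n : Type*} [Fintype m] [Fintype n] (A : Matrix m n ℝ) :
    ‖A‖ ^ 2 = ∑ i, ∑ j, A i j ^ 2 := by
  rw [frobenius_norm_def, ← Real.sqrt_eq_rpow, Real.sq_sqrt (by positivity)]
  simp only [Real.norm_eq_abs, Real.rpow_two, sq_abs]

lemma frobenius_norm_add_sq {m n : Type*} [Fintype m] [Fintype n] (A B : Matrix m n ℝ) :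
    ‖A + B‖ ^ 2 = ‖A‖ ^ 2 + 2 * ∑ i, ∑ j, A i j * B i j + ‖B‖ ^ 2 := by
  simp only [frobenius_norm_sq_eq_sum, Matrix.add_apply, add_sq, Finset.sum_add_distrib, Finset.mul_sum,
    mul_assoc]

lemma frobenius_norm_add_symVecMulVec_sq {ι : Type*} [Fintype ι] {A : Matrix ι ι ℝ} {n : ι → ℝ}
    (hA : A *ᵥ n = 0) (hA' : Aᵀ *ᵥ n = 0) (c : ι → ℝ) :
    ‖A + symVecMulVec n c‖ ^ 2 = ‖A‖ ^ 2 + ‖symVecMulVec n c‖ ^ 2 := by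
  rw [frobenius_norm_add_sq, sum_mul_symVecMulVec, hA, hA', dotProduct_zero, add_zero, mul_zero,
    add_zero]

lemma symPart_of_isSymm {S : Matrix (Fin 3) (Fin 3) ℝ} (hS : S.IsSymm) : symPart S = S := by
  rw [symPart, hS.eq]
  module

lemma symPart_add_of_isSymm (F : Matrix (Fin 3) (Fin 3) ℝ) {S : Matrix (Fin 3) (Fin 3) ℝ}
    (hS : S.IsSymm) : symPart (F + S) = symPart F + S := by
  rw [symPart, symPart, transpose_add, hS.eq]
  module

lemma isTangential_symPart {n : Fin 3 → ℝ} {F : Matrix (Fin 3) (Fin 3) ℝ}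
    (hF : IsTangential n F) : IsTangential n (symPart F) := by
  have h : symPart F *ᵥ n = 0 := by
    rw [symPart, smul_mulVec, add_mulVec, hF.1, hF.2, add_zero, smul_zero]
  refine ⟨h, ?_⟩
  rwa [symPart, transpose_smul, transpose_add, transpose_transpose, add_comm]

lemma Q2_eq_sInf (Q : Matrix (Fin 3) (Fin 3) ℝ → ℝ) (n : Fin 3 → ℝ)
    (F : Matrix (Fin 3) (Fin 3) ℝ) :
    Q2 Q n F = sInf (Set.range fun c => Q (F + symVecMulVec n c)) := by
  simp only [Q2, symVecMulVec_apply, add_assoc]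

lemma Q2_eq_of_forall_le {Q : Matrix (Fin 3) (Fin 3) ℝ → ℝ} {n : Fin 3 → ℝ}
    {F G : Matrix (Fin 3) (Fin 3) ℝ} (hG : G - F ∈ LinearMap.range (symVecMulVec n))
    (hle : ∀ c, Q G ≤ Q (F + symVecMulVec n c)) : Q2 Q n F = Q G := by
  obtain ⟨c, hc⟩ := hG
  rw [Q2_eq_sInf]
  refine IsLeast.csInf_eq ⟨⟨c, ?_⟩, ?_⟩
  · change Q (F + _) = Q G
    rw [hc, add_sub_cancel]
  · rintro _ ⟨c', rfl⟩
    exact hle c'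

lemma Q2_symPart {Q : Matrix (Fin 3) (Fin 3) ℝ → ℝ} (hQ_sym : ∀ F, Q F = Q (symPart F))
    (n : Fin 3 → ℝ) (F : Matrix (Fin 3) (Fin 3) ℝ) : Q2 Q n (symPart F) = Q2 Q n F := by
  simp only [Q2_eq_sInf, hQ_sym (F + _), symPart_add_of_isSymm F (isSymm_symVecMulVec n _)]

lemma le_Q2_of_isTangential {Q : Matrix (Fin 3) (Fin 3) ℝ → ℝ} {c₀ : ℝ} (hc₀ : 0 ≤ c₀)
    (hQ_coerc : ∀ F, c₀ * ‖symPart F‖ ^ 2 ≤ Q F) {n : Fin 3 → ℝ} {F : Matrix (Fin 3) (Fin 3) ℝ}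
    (hF : IsTangential n F) : c₀ * ‖symPart F‖ ^ 2 ≤ Q2 Q n F := by
  rw [Q2_eq_sInf]
  refine le_csInf (Set.range_nonempty _) ?_
  rintro _ ⟨c, rfl⟩
  have hS := isTangential_symPart hF
  calc c₀ * ‖symPart F‖ ^ 2 ≤ c₀ * ‖symPart F + symVecMulVec n c‖ ^ 2 := by
        rw [frobenius_norm_add_symVecMulVec_sq hS.1 hS.2]
        nlinarith [sq_nonneg ‖symVecMulVec n c‖]
    _ = c₀ * ‖symPart (F + symVecMulVec n c)‖ ^ 2 := by
        rw [symPart_add_of_isSymm F (isSymm_symVecMulVec n c)]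
    _ ≤ Q (F + symVecMulVec n c) := hQ_coerc _

theorem Q2_is_coercive_quadratic_form_general
    (Q : Matrix (Fin 3) (Fin 3) ℝ → ℝ)
    (B : Matrix (Fin 3) (Fin 3) ℝ →ₗ[ℝ] Matrix (Fin 3) (Fin 3) ℝ →ₗ[ℝ] ℝ)
    (hB_symm : ∀ F G, B F G = B G F)
    (hQ : ∀ F, Q F = B F F)
    (hQ_sym : ∀ F, Q F = Q (symPart F))
    (c₀ : ℝ) (hc₀ : 0 < c₀)
    (hQ_coerc : ∀ F, c₀ * ‖symPart F‖ ^ 2 ≤ Q F)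
    (n : Fin 3 → ℝ) :
    (∃ B2 : Matrix (Fin 3) (Fin 3) ℝ →ₗ[ℝ] Matrix (Fin 3) (Fin 3) ℝ →ₗ[ℝ] ℝ,
      (∀ F G, IsTangential n F → IsTangential n G → B2 F G = B2 G F) ∧
      (∀ F, IsTangential n F → Q2 Q n F = B2 F F)) ∧
    (∀ F, IsTangential n F → Q2 Q n F = Q2 Q n (symPart F)) ∧
    (∃ c' > 0, ∀ F, IsTangential n F → c' * ‖symPart F‖ ^ 2 ≤ Q2 Q n F) := by
  have hB_pos : ∀ w ∈ LinearMap.range (symVecMulVec n), w ≠ 0 → 0 < B w w := by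
    rintro _ ⟨c, rfl⟩ hc
    calc 0 < c₀ * ‖symVecMulVec n c‖ ^ 2 := by positivity
      _ = c₀ * ‖symPart (symVecMulVec n c)‖ ^ 2 := by
        rw [symPart_of_isSymm (isSymm_symVecMulVec n c)]
      _ ≤ B _ _ := hQ _ ▸ hQ_coerc _
  obtain ⟨P, hP⟩ := LinearMap.BilinForm.exists_linearMap_le_apply_add (B := B) ⟨hB_symm⟩ hB_pos
  have hQ2 : ∀ F, Q2 Q n F = B (P F) (P F) := fun F => by
    rw [← hQ]
    refine Q2_eq_of_forall_le (hP F).1 fun c => ?_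
    simpa only [hQ] using (hP F).2 _ (LinearMap.mem_range_self _ c)
  refine ⟨⟨B.compl₁₂ P P, fun F G _ _ => hB_symm _ _, fun F _ => hQ2 F⟩,
    fun F _ => (Q2_symPart hQ_sym n F).symm, c₀, hc₀, fun F hF => ?_⟩
  exact le_Q2_of_isTangential hc₀.le hQ_coerc hF

/-- the reduced form `Q2` is (i) a quadratic form on tangential matrices,
(ii) depends only on the symmetric part of its argument, and (iii) is positive definite on
symmetric tangential matrices in the quantitative sense. -/
theorem Q2_is_coercive_quadratic_form
    (Q : Matrix (Fin 3) (Fin 3) ℝ → ℝ)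
    (B : Matrix (Fin 3) (Fin 3) ℝ →ₗ[ℝ] Matrix (Fin 3) (Fin 3) ℝ →ₗ[ℝ] ℝ)
    (hB_symm : ∀ F G, B F G = B G F)
    (hQ : ∀ F, Q F = B F F)
    (hQ_sym : ∀ F, Q F = Q (symPart F))
    (c₀ : ℝ) (hc₀ : 0 < c₀)
    (hQ_coerc : ∀ F, c₀ * ‖symPart F‖ ^ 2 ≤ Q F)
    (n : Fin 3 → ℝ) (hn : ∑ i, n i ^ 2 = 1) :
    (∃ B2 : Matrix (Fin 3) (Fin 3) ℝ →ₗ[ℝ] Matrix (Fin 3) (Fin 3) ℝ →ₗ[ℝ] ℝ,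
      (∀ F G, IsTangential n F → IsTangential n G → B2 F G = B2 G F) ∧
      (∀ F, IsTangential n F → Q2 Q n F = B2 F F)) ∧
    (∀ F, IsTangential n F → Q2 Q n F = Q2 Q n (symPart F)) ∧
    (∃ c' > 0, ∀ F, IsTangential n F → c' * ‖symPart F‖ ^ 2 ≤ Q2 Q n F) :=
  Q2_is_coercive_quadratic_form_general Q B hB_symm hQ hQ_sym c₀ hc₀ hQ_coerc n
end
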